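/- arXiv:2106.06706 — 7 statements merged into one kernel-verified Lean document; each statement's English description precedes it below -/
import Mathlib

section
/- For every online algorithm ALG and all nonnegative round weights w_1, …, w_T, there exists a committing online algorithm A (one whose round-t matching contains every edge it previously selected that was revealed successful) whose expected reward is at least one half of the expected reward of ALG. -/
open Finset

/-- A finite simple graph presented via an abstract edge type: each edge has a
set of exactly two endpoints, and distinct edges have distinct endpoint sets. -/
structure GraphEdges (V E : Type) where
  ends : E → Finset V
  card_ends : ∀ e, (ends e).card = 2
  ends_injective : Function.Injective ends

variable {V E : Type}

/-- A matching: a set of pairwise endpoint-disjoint edges. -/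
def GraphEdges.IsMatching (G : GraphEdges V E) (M : Finset E) : Prop :=
  ∀ e ∈ M, ∀ f ∈ M, e ≠ f → Disjoint (G.ends e) (G.ends f)

/-- `select` is an online algorithm: under each realization `ω` it selects a
matching in every round, and its round-`t` selection depends only on its own
selections in earlier rounds and on the realized values of the edges it
selected in those rounds. -/
def GraphEdges.IsOnline (G : GraphEdges V E) (select : (E → Bool) → ℕ → Finset E) : Prop :=
  (∀ ω t, G.IsMatching (select ω t)) ∧
  (∀ ω ω' t, (∀ s, s < t → ∀ e ∈ select ω s, ω' e = ω e) → select ω' t = select ω t)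

/-- Probability of the sample graph `ω` under independent Bernoulli edges. -/
def probOf [Fintype E] (p : E → ℝ) (ω : E → Bool) : ℝ :=
  ∏ e : E, if ω e then p e else 1 - p e

/-- Expected reward of an algorithm: the `w`-weighted expected number of
successful selected edges over rounds `0, …, T-1`. -/
noncomputable def expectedReward [Fintype E] [DecidableEq E] (p : E → ℝ) (w : ℕ → ℝ)
    (T : ℕ) (select : (E → Bool) → ℕ → Finset E) : ℝ :=
  ∑ ω : E → Bool, probOf p ω *
    ∑ t ∈ Finset.range T, w t * ((select ω t).filter (fun e => ω e)).card

/-- A committing algorithm: its round-`t` matching contains every edge it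
selected in an earlier round that was revealed successful. -/
def IsCommitting (select : (E → Bool) → ℕ → Finset E) : Prop :=
  ∀ ω t s, s < t → ∀ e ∈ select ω s, ω e = true → e ∈ select ω t

/-!
The committing algorithm `A_r = G.commitSim alg r` simulates `alg` with the help of an auxiliary
sample graph `r`. Each round it keeps the edges it has already seen succeed and adds every edge of
`alg`'s current matching that touches none of them. An edge that `alg` selects but `A_r` cannot
select is *blocked*: it touches a committed edge forever, so `A_r` never learns `ω e` and feeds
`alg` the value `r e` instead. Swapping `r` and `ω` on the blocked set is a measure-preserving
bijection of pairs of sample graphs (the blocked set can be recomputed from the simulated sample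
graph), so `alg` sees a correctly distributed sample graph. In each round a successful edge of
`alg` is either a new edge of `A_r`, successful under `ω`, or touches a committed edge; since `alg`
selects a matching, at most two of its edges touch each committed edge. Hence `alg` earns at most
twice what `A_r` earns, and some `r` is at least as good as the average.
-/

section Swap

variable [DecidableEq E]

def swapOn (S : Finset E) (q : (E → Bool) × (E → Bool)) : (E → Bool) × (E → Bool) :=
  (S.piecewise q.2 q.1, S.piecewise q.1 q.2)

lemma swapOn_swapOn (S : Finset E) (q : (E → Bool) × (E → Bool)) :
    swapOn S (swapOn S q) = q := by
  ext e <;> by_cases he : e ∈ S <;> simp [swapOn, he]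

lemma bijective_swapOn_of_recover (S : (E → Bool) × (E → Bool) → Finset E)
    (B : (E → Bool) → Finset E) (hB : ∀ q, B (swapOn (S q) q).2 = S q)
    (hS : ∀ q, S (swapOn (B q.2) q) = B q.2) :
    Function.Bijective fun q => swapOn (S q) q :=
  Function.bijective_iff_has_inverse.2
    ⟨fun q => swapOn (B q.2) q, fun q => by simp only [hB, swapOn_swapOn],
      fun q => by simp only [hS, swapOn_swapOn]⟩

end Swap

section Probability

variable [Fintype E]

lemma probOf_nonneg {p : E → ℝ} (hp : ∀ e, 0 ≤ p e ∧ p e ≤ 1) (ω : E → Bool) :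
    0 ≤ probOf p ω :=
  prod_nonneg fun e _ => by split_ifs <;> linarith [hp e]

lemma sum_probOf [DecidableEq E] (p : E → ℝ) : ∑ ω : E → Bool, probOf p ω = 1 := by
  simp only [probOf]
  rw [← Fintype.prod_sum (fun e (b : Bool) => if b then p e else 1 - p e)]
  simp

lemma sum_probOf_mul_le [DecidableEq E] {p : E → ℝ} (hp : ∀ e, 0 ≤ p e ∧ p e ≤ 1)
    {f : (E → Bool) → ℝ} {c : ℝ} (hf : ∀ ω, f ω ≤ c) : ∑ ω, probOf p ω * f ω ≤ c :=
  calc ∑ ω, probOf p ω * f ω ≤ ∑ ω, probOf p ω * c :=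
        sum_le_sum fun ω _ => mul_le_mul_of_nonneg_left (hf ω) (probOf_nonneg hp ω)
    _ = c := by rw [← sum_mul, sum_probOf, one_mul]

variable [DecidableEq E]

lemma probOf_swapOn (p : E → ℝ) (S : Finset E) (q : (E → Bool) × (E → Bool)) :
    probOf p (swapOn S q).1 * probOf p (swapOn S q).2 = probOf p q.1 * probOf p q.2 := by
  simp only [probOf, ← prod_mul_distrib]
  refine prod_congr rfl fun e _ => ?_
  by_cases he : e ∈ S <;> simp [swapOn, he, mul_comm]

theorem sum_probOf_mul_swapOn_of_recover (p : E → ℝ)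
    (S : (E → Bool) × (E → Bool) → Finset E)
    (B : (E → Bool) → Finset E) (hB : ∀ q, B (swapOn (S q) q).2 = S q)
    (hS : ∀ q, S (swapOn (B q.2) q) = B q.2) (g : (E → Bool) → ℝ) :
    ∑ q : (E → Bool) × (E → Bool), probOf p q.1 * probOf p q.2 * g (swapOn (S q) q).2
      = ∑ ν, probOf p ν * g ν :=
  calc _ = ∑ q : (E → Bool) × (E → Bool), probOf p (swapOn (S q) q).1 *
          probOf p (swapOn (S q) q).2 * g (swapOn (S q) q).2 := by simp only [probOf_swapOn]
    _ = ∑ q : (E → Bool) × (E → Bool), probOf p q.1 * probOf p q.2 * g q.2 :=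
        (bijective_swapOn_of_recover S B hB hS).sum_comp
          fun q => probOf p q.1 * probOf p q.2 * g q.2
    _ = _ := by
        simp only [Fintype.sum_prod_type, mul_assoc, ← mul_sum, ← sum_mul, sum_probOf, one_mul]

end Probability

namespace GraphEdges

variable {G : GraphEdges V E}

lemma IsMatching.subset {M N : Finset E} (hM : G.IsMatching M) (hNM : N ⊆ M) :
    G.IsMatching N :=
  fun e he f hf hef => hM e (hNM he) f (hNM hf) hef

lemma IsMatching.card_le_two_mul {M C : Finset E} (hM : G.IsMatching M)
    (hC : ∀ e ∈ M, ∃ c ∈ C, ¬Disjoint (G.ends e) (G.ends c)) : M.card ≤ 2 * C.card := by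
  classical
  set X := C.biUnion G.ends
  have hmeet : ∀ e ∈ M, (G.ends e ∩ X).Nonempty := by
    intro e he
    obtain ⟨c, hc, hec⟩ := hC e he
    obtain ⟨v, hve, hvc⟩ := not_disjoint_iff.1 hec
    exact ⟨v, mem_inter.2 ⟨hve, mem_biUnion.2 ⟨c, hc, hvc⟩⟩⟩
  have hdisj : (M : Set E).PairwiseDisjoint fun e => G.ends e ∩ X :=
    fun e he f hf hef => (hM e he f hf hef).mono inter_subset_left inter_subset_left
  calc M.card ≤ (M.biUnion fun e => G.ends e ∩ X).card := card_le_card_biUnion hdisj hmeet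
    _ ≤ X.card := card_le_card (biUnion_subset.2 fun _ _ => inter_subset_right)
    _ ≤ ∑ c ∈ C, (G.ends c).card := card_biUnion_le
    _ = 2 * C.card := by simp [G.card_ends, mul_comm]

end GraphEdges

structure CommitState (E : Type) where
  committed : Finset E
  algSelected : Finset E
  selected : Finset E

namespace CommitState

variable (G : GraphEdges V E) (s : CommitState E)

def blocked [DecidableEq E] : Finset E := s.algSelected \ s.selected

open Classical in
noncomputable def fresh (M : Finset E) : Finset E :=
  M.filter fun e => ∀ c ∈ s.committed, Disjoint (G.ends e) (G.ends c)

noncomputable def sel [DecidableEq E] (M : Finset E) : Finset E := s.committed ∪ s.fresh G M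

noncomputable def step [DecidableEq E] (M : Finset E) (ω : E → Bool) : CommitState E :=
  ⟨(s.sel G M).filter fun e => ω e, s.algSelected ∪ M, s.selected ∪ s.sel G M⟩

variable {G s}

open Classical in
lemma mem_fresh {M : Finset E} {e : E} :
    e ∈ s.fresh G M ↔ e ∈ M ∧ ∀ c ∈ s.committed, Disjoint (G.ends e) (G.ends c) :=
  mem_filter

lemma disjoint_committed_fresh (M : Finset E) : Disjoint s.committed (s.fresh G M) :=
  disjoint_left.2 fun e he hfresh => by
    have hself := mem_fresh.1 hfresh |>.2 e he
    rw [disjoint_self, bot_eq_empty, ← card_eq_zero, G.card_ends] at hself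
    exact two_ne_zero hself

variable [DecidableEq E]

lemma isMatching_sel {M : Finset E} (hs : G.IsMatching s.committed) (hM : G.IsMatching M) :
    G.IsMatching (s.sel G M) := by
  intro e he f hf hef
  rcases mem_union.1 he with he | he <;> rcases mem_union.1 hf with hf | hf
  · exact hs e he f hf hef
  · exact ((mem_fresh.1 hf).2 e he).symm
  · exact (mem_fresh.1 he).2 f hf
  · exact hM e (mem_fresh.1 he).1 f (mem_fresh.1 hf).1 hef

lemma card_filter_sel {M : Finset E} {ω : E → Bool} (hω : ∀ e ∈ s.committed, ω e = true) :
    ((s.sel G M).filter fun e => ω e).card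
      = s.committed.card + ((s.fresh G M).filter fun e => ω e).card := by
  rw [sel, filter_union, filter_true_of_mem hω,
    card_union_of_disjoint ((disjoint_committed_fresh M).mono_right (filter_subset _ _))]

lemma step_congr {M : Finset E} {ω ω' : E → Bool} (h : ∀ e ∈ s.sel G M, ω' e = ω e) :
    s.step G M ω' = s.step G M ω := by
  simp only [step, CommitState.mk.injEq, and_true]
  exact filter_congr fun e he => by rw [h e he]

end CommitState

namespace GraphEdges

variable [DecidableEq E] (G : GraphEdges V E) (alg : (E → Bool) → ℕ → Finset E)
  (r ω : E → Bool)

noncomputable def commitRun : ℕ → CommitState E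
  | 0 => ⟨∅, ∅, ∅⟩
  | t + 1 => (commitRun t).step G (alg ((commitRun t).blocked.piecewise r ω) t) ω

noncomputable def simReal (t : ℕ) : E → Bool := (G.commitRun alg r ω t).blocked.piecewise r ω

noncomputable def algSel (t : ℕ) : Finset E := alg (G.simReal alg r ω t) t

noncomputable def commitSim (t : ℕ) : Finset E :=
  (G.commitRun alg r ω t).sel G (G.algSel alg r ω t)

variable {r ω}

lemma commitRun_succ (t : ℕ) :
    G.commitRun alg r ω (t + 1) = (G.commitRun alg r ω t).step G (G.algSel alg r ω t) ω :=
  rfl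

lemma committed_subset_commitSim (t : ℕ) :
    (G.commitRun alg r ω t).committed ⊆ G.commitSim alg r ω t :=
  subset_union_left

lemma fresh_subset_commitSim (t : ℕ) :
    (G.commitRun alg r ω t).fresh G (G.algSel alg r ω t) ⊆ G.commitSim alg r ω t :=
  subset_union_right

lemma eq_true_of_mem_committed {t : ℕ} {e : E} (he : e ∈ (G.commitRun alg r ω t).committed) :
    ω e = true := by
  cases t with
  | zero => simp [commitRun] at he
  | succ t => exact (mem_filter.1 he).2

lemma monotone_committed : Monotone fun t => (G.commitRun alg r ω t).committed :=
  monotone_nat_of_le_succ fun t _ he => mem_filter.2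
    ⟨G.committed_subset_commitSim alg t he, G.eq_true_of_mem_committed alg he⟩

lemma monotone_algSelected : Monotone fun t => (G.commitRun alg r ω t).algSelected :=
  monotone_nat_of_le_succ fun _ => subset_union_left

lemma monotone_selected : Monotone fun t => (G.commitRun alg r ω t).selected :=
  monotone_nat_of_le_succ fun _ => subset_union_left

lemma algSelected_commitRun (t : ℕ) :
    (G.commitRun alg r ω t).algSelected = (range t).biUnion (G.algSel alg r ω) := by
  induction t with
  | zero => rfl
  | succ t ih =>
    rw [range_add_one, biUnion_insert, union_comm, ← ih]
    rfl

lemma selected_commitRun (t : ℕ) :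
    (G.commitRun alg r ω t).selected = (range t).biUnion (G.commitSim alg r ω) := by
  induction t with
  | zero => rfl
  | succ t ih =>
    rw [range_add_one, biUnion_insert, union_comm, ← ih]
    rfl

lemma algSel_subset_algSelected {s t : ℕ} (hst : s < t) :
    G.algSel alg r ω s ⊆ (G.commitRun alg r ω t).algSelected := by
  rw [algSelected_commitRun]
  exact subset_biUnion_of_mem _ (mem_range.2 hst)

lemma commitSim_subset_selected {s t : ℕ} (hst : s < t) :
    G.commitSim alg r ω s ⊆ (G.commitRun alg r ω t).selected := by
  rw [selected_commitRun]
  exact subset_biUnion_of_mem _ (mem_range.2 hst)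

lemma simReal_of_mem_blocked {t : ℕ} {e : E} (he : e ∈ (G.commitRun alg r ω t).blocked) :
    G.simReal alg r ω t e = r e :=
  piecewise_eq_of_mem _ _ _ he

lemma simReal_of_mem_selected {t : ℕ} {e : E} (he : e ∈ (G.commitRun alg r ω t).selected) :
    G.simReal alg r ω t e = ω e :=
  piecewise_eq_of_notMem _ _ _ fun hb => (mem_sdiff.1 hb).2 he

lemma exists_mem_fresh_of_mem_commitSim {u : ℕ} {e : E} (he : e ∈ G.commitSim alg r ω u) :
    ∃ v ≤ u, e ∈ (G.commitRun alg r ω v).fresh G (G.algSel alg r ω v) := by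
  induction u with
  | zero =>
    rcases mem_union.1 he with he | he
    · simp [commitRun] at he
    · exact ⟨0, le_rfl, he⟩
  | succ u ih =>
    rcases mem_union.1 he with he | he
    · obtain ⟨v, hvu, hv⟩ := ih (mem_filter.1 he).1
      exact ⟨v, hvu.trans u.le_succ, hv⟩
    · exact ⟨u + 1, le_rfl, he⟩

/-- A blocked edge touches an edge that is committed from then on. -/
lemma notMem_commitSim_of_mem_blocked {s : ℕ} {e : E}
    (he : e ∈ (G.commitRun alg r ω s).blocked) (u : ℕ) : e ∉ G.commitSim alg r ω u := by
  obtain ⟨heAlg, heUnsel⟩ := mem_sdiff.1 he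
  have hunsel : ∀ v < s, e ∉ G.commitSim alg r ω v :=
    fun v hv hv' => heUnsel (G.commitSim_subset_selected alg hv hv')
  obtain ⟨s₀, hs₀, he₀⟩ := mem_biUnion.1 ((G.algSelected_commitRun alg s) ▸ heAlg)
  have hs₀ := mem_range.1 hs₀
  obtain ⟨c, hc, hec⟩ : ∃ c ∈ (G.commitRun alg r ω s₀).committed,
      ¬Disjoint (G.ends e) (G.ends c) := by
    by_contra! h
    exact hunsel s₀ hs₀
      (G.fresh_subset_commitSim alg s₀ (CommitState.mem_fresh.2 ⟨he₀, h⟩))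
  intro heu
  obtain ⟨v, -, hv⟩ := G.exists_mem_fresh_of_mem_commitSim alg heu
  rcases lt_or_ge v s with hvs | hsv
  · exact hunsel v hvs (G.fresh_subset_commitSim alg v hv)
  · exact hec ((CommitState.mem_fresh.1 hv).2 c
      (G.monotone_committed alg (hs₀.le.trans hsv) hc))

lemma monotone_blocked : Monotone fun t => (G.commitRun alg r ω t).blocked := by
  intro s t hst e he
  refine mem_sdiff.2 ⟨G.monotone_algSelected alg hst (mem_sdiff.1 he).1, fun hsel => ?_⟩
  obtain ⟨u, -, hu⟩ := mem_biUnion.1 ((G.selected_commitRun alg t) ▸ hsel)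
  exact G.notMem_commitSim_of_mem_blocked alg he u hu

lemma simReal_eq_of_mem_algSelected {s t : ℕ} (hst : s ≤ t) {e : E}
    (he : e ∈ (G.commitRun alg r ω s).algSelected) :
    G.simReal alg r ω t e = G.simReal alg r ω s e := by
  by_cases hb : e ∈ (G.commitRun alg r ω s).blocked
  · rw [G.simReal_of_mem_blocked alg hb,
      G.simReal_of_mem_blocked alg (G.monotone_blocked alg hst hb)]
  · have hsel : e ∈ (G.commitRun alg r ω s).selected := by
      simpa [CommitState.blocked, he] using hb
    rw [G.simReal_of_mem_selected alg hsel,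
      G.simReal_of_mem_selected alg (G.monotone_selected alg hst hsel)]

variable {G alg}

/-- Later simulated sample graphs agree with earlier ones on the edges `alg` has selected. -/
lemma alg_simReal_eq_algSel (halg : G.IsOnline alg) {s t : ℕ} (hst : s ≤ t) :
    alg (G.simReal alg r ω t) s = G.algSel alg r ω s := by
  induction s using Nat.strong_induction_on generalizing t with
  | _ s ih =>
    refine halg.2 (G.simReal alg r ω s) _ s fun s' hs' e he => ?_
    rw [ih s' hs' hs'.le] at he
    exact G.simReal_eq_of_mem_algSelected alg hst (G.algSel_subset_algSelected alg hs' he)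

section Congr

variable {r' ω' : E → Bool} {U : ℕ}

lemma algSel_congr (halg : G.IsOnline alg)
    (hr : ∀ e ∈ (G.commitRun alg r ω U).blocked, r' e = r e)
    (hω : ∀ e ∈ (G.commitRun alg r ω U).selected, ω' e = ω e) {v : ℕ} (hv : v ≤ U)
    (hrun : G.commitRun alg r' ω' v = G.commitRun alg r ω v) :
    G.algSel alg r' ω' v = G.algSel alg r ω v := by
  change alg ((G.commitRun alg r' ω' v).blocked.piecewise r' ω') v = _
  rw [hrun]
  refine halg.2 (G.simReal alg r ω v) _ v fun s hs e he => ?_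
  rw [alg_simReal_eq_algSel halg hs.le] at he
  have heAlg := G.algSel_subset_algSelected alg hs he
  by_cases hb : e ∈ (G.commitRun alg r ω v).blocked
  · rw [piecewise_eq_of_mem _ _ _ hb, G.simReal_of_mem_blocked alg hb,
      hr e (G.monotone_blocked alg hv hb)]
  · have hsel : e ∈ (G.commitRun alg r ω v).selected := by
      simpa [CommitState.blocked, heAlg] using hb
    rw [piecewise_eq_of_notMem _ _ _ hb, G.simReal_of_mem_selected alg hsel,
      hω e (G.monotone_selected alg hv hsel)]

lemma commitRun_congr (halg : G.IsOnline alg)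
    (hr : ∀ e ∈ (G.commitRun alg r ω U).blocked, r' e = r e)
    (hω : ∀ e ∈ (G.commitRun alg r ω U).selected, ω' e = ω e) {u : ℕ}
    (hu : u ≤ U) :
    G.commitRun alg r' ω' u = G.commitRun alg r ω u := by
  induction u with
  | zero => rfl
  | succ u ih =>
    have hrun := ih (u.le_succ.trans hu)
    rw [commitRun_succ, commitRun_succ, hrun,
      algSel_congr halg hr hω (u.le_succ.trans hu) hrun]
    exact CommitState.step_congr fun e he =>
      hω e (G.monotone_selected alg hu (G.commitSim_subset_selected alg u.lt_succ_self he))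

lemma commitSim_congr (halg : G.IsOnline alg)
    (hr : ∀ e ∈ (G.commitRun alg r ω U).blocked, r' e = r e)
    (hω : ∀ e ∈ (G.commitRun alg r ω U).selected, ω' e = ω e) :
    G.commitSim alg r' ω' U = G.commitSim alg r ω U := by
  have hrun := commitRun_congr halg hr hω le_rfl
  rw [commitSim, hrun, algSel_congr halg hr hω le_rfl hrun, commitSim]

end Congr

variable (G alg r)

lemma isMatching_committed (halg : G.IsOnline alg) (ω : E → Bool) (t : ℕ) :
    G.IsMatching (G.commitRun alg r ω t).committed := by
  induction t with
  | zero => simp [commitRun, IsMatching]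
  | succ t ih => exact (CommitState.isMatching_sel ih (halg.1 _ t)).subset (filter_subset _ _)

lemma isOnline_commitSim (halg : G.IsOnline alg) : G.IsOnline (G.commitSim alg r) := by
  refine ⟨fun ω t => CommitState.isMatching_sel (G.isMatching_committed alg r halg ω t)
    (halg.1 _ t), fun ω ω' t h => commitSim_congr halg (fun _ _ => rfl) fun e he => ?_⟩
  obtain ⟨s, hs, he⟩ := mem_biUnion.1 ((G.selected_commitRun alg t) ▸ he)
  exact h s (mem_range.1 hs) e he

lemma isCommitting_commitSim : IsCommitting (G.commitSim alg r) :=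
  fun _ _ _ hst _ he hωe => G.committed_subset_commitSim alg _
    (G.monotone_committed alg hst (mem_filter.2 ⟨he, hωe⟩))

variable {G alg r}

/-- A successful edge of `alg`'s matching is either fresh, and then `alg` sees its true value, or
one of the at most two edges of the matching touching some committed edge. -/
lemma card_filter_algSel_le (halg : G.IsOnline alg) {t T : ℕ} (ht : t < T) :
    ((G.algSel alg r ω t).filter fun e => G.simReal alg r ω T e).card
      ≤ 2 * ((G.commitSim alg r ω t).filter fun e => ω e).card := by
  set s := G.commitRun alg r ω t
  set M := G.algSel alg r ω t
  have hsub : M.filter (fun e => G.simReal alg r ω T e)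
      ⊆ (s.fresh G M).filter (fun e => ω e) ∪ (M \ s.fresh G M) := by
    intro e he
    obtain ⟨heM, heSim⟩ := mem_filter.1 he
    by_cases hf : e ∈ s.fresh G M
    · have hp := G.commitSim_subset_selected alg ht (G.fresh_subset_commitSim alg t hf)
      rw [G.simReal_of_mem_selected alg hp] at heSim
      exact mem_union_left _ (mem_filter.2 ⟨hf, heSim⟩)
    · exact mem_union_right _ (mem_sdiff.2 ⟨heM, hf⟩)
  have hblocked : (M \ s.fresh G M).card ≤ 2 * s.committed.card := by
    refine ((halg.1 _ t).subset sdiff_subset).card_le_two_mul fun e he => ?_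
    obtain ⟨heM, hf⟩ := mem_sdiff.1 he
    by_contra! h
    exact hf (CommitState.mem_fresh.2 ⟨heM, h⟩)
  have hsel := CommitState.card_filter_sel (G := G) (s := s) (M := M) (ω := ω)
    fun e he => G.eq_true_of_mem_committed alg he
  have := card_le_card hsub
  have := card_union_le ((s.fresh G M).filter fun e => ω e) (M \ s.fresh G M)
  change _ ≤ 2 * ((s.sel G M).filter fun e => ω e).card
  omega

end GraphEdges

def pathReward (w : ℕ → ℝ) (T : ℕ) (ω : E → Bool) (sel : ℕ → Finset E) : ℝ :=
  ∑ t ∈ range T, w t * ((sel t).filter fun e => ω e).card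

lemma expectedReward_eq_sum_pathReward [Fintype E] [DecidableEq E] (p : E → ℝ) (w : ℕ → ℝ)
    (T : ℕ) (a : (E → Bool) → ℕ → Finset E) :
    expectedReward p w T a = ∑ ω, probOf p ω * pathReward w T ω (a ω) :=
  rfl

namespace GraphEdges

variable [DecidableEq E] {G : GraphEdges V E} {alg : (E → Bool) → ℕ → Finset E}

lemma pathReward_alg_simReal_le (halg : G.IsOnline alg) {w : ℕ → ℝ} (hw : ∀ t, 0 ≤ w t)
    (T : ℕ) (r ω : E → Bool) :
    pathReward w T (G.simReal alg r ω T) (alg (G.simReal alg r ω T))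
      ≤ 2 * pathReward w T ω (G.commitSim alg r ω) := by
  rw [pathReward, pathReward, mul_sum]
  refine sum_le_sum fun t ht => ?_
  have ht := mem_range.1 ht
  rw [alg_simReal_eq_algSel halg ht.le]
  calc w t * ((G.algSel alg r ω t).filter fun e => G.simReal alg r ω T e).card
      ≤ w t * (2 * ((G.commitSim alg r ω t).filter fun e => ω e).card : ℕ) :=
        mul_le_mul_of_nonneg_left (Nat.cast_le.2 (card_filter_algSel_le halg ht)) (hw t)
    _ = 2 * (w t * ((G.commitSim alg r ω t).filter fun e => ω e).card) := by
        push_cast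
        ring

lemma blocked_simReal (halg : G.IsOnline alg) (T : ℕ) (r ω : E → Bool) :
    (G.commitRun alg (G.simReal alg r ω T) (G.simReal alg r ω T) T).blocked
      = (G.commitRun alg r ω T).blocked := by
  rw [commitRun_congr halg (fun e he => G.simReal_of_mem_blocked alg he)
    (fun e he => G.simReal_of_mem_selected alg he) le_rfl]

lemma blocked_piecewise_blocked (halg : G.IsOnline alg) (T : ℕ) (ρ ν : E → Bool) :
    (G.commitRun alg ((G.commitRun alg ν ν T).blocked.piecewise ν ρ)
        ((G.commitRun alg ν ν T).blocked.piecewise ρ ν) T).blocked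
      = (G.commitRun alg ν ν T).blocked := by
  rw [commitRun_congr halg (fun e he => piecewise_eq_of_mem _ _ _ he)
    (fun e he => piecewise_eq_of_notMem _ _ _ fun hb => (mem_sdiff.1 hb).2 he) le_rfl]

lemma expectedReward_le_two_mul_sum [Fintype E] (halg : G.IsOnline alg) {p : E → ℝ}
    (hp : ∀ e, 0 ≤ p e ∧ p e ≤ 1) {w : ℕ → ℝ} (hw : ∀ t, 0 ≤ w t) (T : ℕ) :
    expectedReward p w T alg
      ≤ 2 * ∑ r, probOf p r * expectedReward p w T (G.commitSim alg r) := by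
  have hsim := sum_probOf_mul_swapOn_of_recover p
    (fun q => (G.commitRun alg q.1 q.2 T).blocked) (fun ν => (G.commitRun alg ν ν T).blocked)
    (fun q => blocked_simReal halg T q.1 q.2) (fun q => blocked_piecewise_blocked halg T q.1 q.2)
    (fun ν => pathReward w T ν (alg ν))
  calc expectedReward p w T alg
      = ∑ q : (E → Bool) × (E → Bool), probOf p q.1 * probOf p q.2 *
          pathReward w T (G.simReal alg q.1 q.2 T) (alg (G.simReal alg q.1 q.2 T)) :=
        hsim.symm
    _ ≤ ∑ q : (E → Bool) × (E → Bool), probOf p q.1 * probOf p q.2 *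
          (2 * pathReward w T q.2 (G.commitSim alg q.1 q.2)) :=
        sum_le_sum fun q _ => mul_le_mul_of_nonneg_left (pathReward_alg_simReal_le halg hw T _ _)
          (mul_nonneg (probOf_nonneg hp _) (probOf_nonneg hp _))
    _ = 2 * ∑ r, probOf p r * expectedReward p w T (G.commitSim alg r) := by
        simp only [Fintype.sum_prod_type, expectedReward_eq_sum_pathReward, mul_sum]
        exact sum_congr rfl fun _ _ => sum_congr rfl fun _ _ => by ring

end GraphEdges

theorem committing_half_approximates_opt_general
    {V E : Type} [Fintype E] [DecidableEq E]
    (G : GraphEdges V E) (p : E → ℝ) (hp : ∀ e, 0 ≤ p e ∧ p e ≤ 1)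
    (T : ℕ) (w : ℕ → ℝ) (hw : ∀ t, 0 ≤ w t)
    (alg : (E → Bool) → ℕ → Finset E) (halg : G.IsOnline alg) :
    ∃ a : (E → Bool) → ℕ → Finset E, G.IsOnline a ∧ IsCommitting a ∧
      (1 / 2 : ℝ) * expectedReward p w T alg ≤ expectedReward p w T a := by
  obtain ⟨r, hr⟩ :=
    Finite.exists_max fun r : E → Bool => expectedReward p w T (G.commitSim alg r)
  refine ⟨G.commitSim alg r, G.isOnline_commitSim alg r halg,
    G.isCommitting_commitSim alg r, ?_⟩
  have hsum := G.expectedReward_le_two_mul_sum halg hp hw T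
  have havg := sum_probOf_mul_le hp hr
  linarith

/-- For every online algorithm and nonnegative round weights,
some committing online algorithm attains at least half its expected reward. -/
theorem committing_half_approximates_opt
    {V E : Type} [DecidableEq V] [Fintype E] [DecidableEq E]
    (G : GraphEdges V E) (p : E → ℝ) (hp : ∀ e, 0 ≤ p e ∧ p e ≤ 1)
    (T : ℕ) (w : ℕ → ℝ) (hw : ∀ t, 0 ≤ w t)
    (alg : (E → Bool) → ℕ → Finset E) (halg : G.IsOnline alg) :
    ∃ a : (E → Bool) → ℕ → Finset E, G.IsOnline a ∧ IsCommitting a ∧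
      (1 / 2 : ℝ) * expectedReward p w T alg ≤ expectedReward p w T a :=
  committing_half_approximates_opt_general G p hp T w hw alg halg
end

section
/- In any finite simple graph G = (V, E) with nonnegative edge weights w : E → ℝ_{≥0}, there exists a set of edges S ⊆ E such that Σ_{e ∈ S} w(e) ≥ (1/3) · Σ_{e ∈ E} w(e) and, for every vertex v, the number of edges of S incident to v is at most ⌈d_v / 2⌉, where d_v is the degree of v in G. -/
open Finset

/-!
Greedy charging. Scan the edges by decreasing weight and keep an edge unless one of its endpoints
`v` already carries `⌈d_v / 2⌉` kept edges. A rejected edge is charged to such an endpoint `v`; at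
`v` at most `d_v - ⌈d_v / 2⌉ ≤ ⌈d_v / 2⌉` edges are rejected, each no heavier than any kept edge at
`v`, so the weight charged to `v` is at most the kept weight at `v`. Summing over `v`, the rejected
weight is at most twice the kept weight.
-/

theorem Finset.sum_le_sum_of_card_le_of_forall_le {ι M : Type*} [AddCommMonoid M] [LinearOrder M]
    [IsOrderedAddMonoid M] {s t : Finset ι} {f : ι → M} (hf : ∀ j ∈ t, 0 ≤ f j)
    (hcard : #s ≤ #t) (hle : ∀ i ∈ s, ∀ j ∈ t, f i ≤ f j) :
    ∑ i ∈ s, f i ≤ ∑ j ∈ t, f j := by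
  rcases t.eq_empty_or_nonempty with rfl | ht
  · simp [card_eq_zero.mp (Nat.le_zero.mp hcard)]
  obtain ⟨j, hj, hmin⟩ := exists_mem_eq_inf' ht f
  calc ∑ i ∈ s, f i ≤ #s • t.inf' ht f :=
        sum_le_card_nsmul s f _ fun i hi => le_inf' ht f fun j hj => hle i hi j hj
    _ ≤ #t • t.inf' ht f := nsmul_le_nsmul_left (hmin ▸ hf j hj) hcard
    _ ≤ ∑ j ∈ t, f j := card_nsmul_le_sum _ _ _ fun j hj => inf'_le f hj

namespace GraphEdges

variable {V E : Type} [DecidableEq V] (G : GraphEdges V E)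

def edgesAt (S : Finset E) (v : V) : Finset E := S.filter (fun e => v ∈ G.ends e)

theorem edgesAt_insert_of_notMem [DecidableEq E] {S : Finset E} {a : E} {v : V}
    (hv : v ∉ G.ends a) :
    G.edgesAt (insert a S) v = G.edgesAt S v := by
  rw [edgesAt, filter_insert, if_neg hv, edgesAt]

theorem card_edgesAt_insert_le [DecidableEq E] (S : Finset E) (a : E) (v : V) :
    #(G.edgesAt (insert a S) v) ≤ #(G.edgesAt S v) + 1 := by
  rw [edgesAt, edgesAt, filter_insert]
  split_ifs
  exacts [card_insert_le _ _, Nat.le_succ _]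

theorem card_edgesAt_add_card_edgesAt_compl [Fintype E] [DecidableEq E] (S : Finset E) (v : V) :
    #(G.edgesAt S v) + #(G.edgesAt Sᶜ v) = #(G.edgesAt univ v) := by
  rw [edgesAt, edgesAt, edgesAt, ← card_union_of_disjoint
    (disjoint_filter_filter disjoint_compl_right), ← filter_union, union_compl]

theorem sum_sum_edgesAt {M : Type*} [AddCommMonoid M] (S : Finset E) {B : Finset V}
    (hB : ∀ e ∈ S, G.ends e ⊆ B) (w : E → M) :
    ∑ v ∈ B, ∑ e ∈ G.edgesAt S v, w e = 2 • ∑ e ∈ S, w e := by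
  rw [sum_comm' (t' := S) (s' := G.ends), smul_sum]
  · exact sum_congr rfl fun e _ => by rw [sum_const, G.card_ends]
  · intro v e
    simp only [edgesAt, mem_filter]
    exact ⟨fun ⟨_, he, hv⟩ => ⟨hv, he⟩, fun ⟨hv, he⟩ => ⟨hB e he hv, he, hv⟩⟩

/-- `T` is what the greedy algorithm keeps when it scans `U` by decreasing weight and accepts an
edge whenever no endpoint is at its cap `c`. -/
theorem exists_greedy_capped_subset {β : Type*} [LinearOrder β]
    (c : V → ℕ) (w : E → β) (U : Finset E) :
    ∃ T ⊆ U, (∀ v, #(G.edgesAt T v) ≤ c v) ∧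
      ∀ e ∈ U, e ∉ T → ∃ v ∈ G.ends e, c v ≤ #(G.edgesAt T v) ∧
        ∀ f ∈ G.edgesAt T v, w e ≤ w f := by
  classical
  induction U using induction_on_min_value w with
  | empty => exact ⟨∅, subset_rfl, fun v => by simp [edgesAt], by simp⟩
  | insert a U _ ha_min ih =>
    obtain ⟨T, hTU, hcap, hsat⟩ := ih
    by_cases hroom : ∀ v ∈ G.ends a, #(G.edgesAt T v) < c v
    · refine ⟨insert a T, insert_subset_insert a hTU, fun v => ?_, fun e he heT => ?_⟩
      · by_cases hv : v ∈ G.ends a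
        · exact (G.card_edgesAt_insert_le T a v).trans (hroom v hv)
        · rw [G.edgesAt_insert_of_notMem hv]
          exact hcap v
      · obtain ⟨v, hv, hcv, hle⟩ := hsat e ((mem_insert.mp he).resolve_left
          fun h => heT (h ▸ mem_insert_self e T)) fun h => heT (mem_insert_of_mem h)
        have hva : v ∉ G.ends a := fun h => (hroom v h).not_ge hcv
        rw [← G.edgesAt_insert_of_notMem hva] at hcv hle
        exact ⟨v, hv, hcv, hle⟩
    · push Not at hroom
      obtain ⟨v, hv, hcv⟩ := hroom
      refine ⟨T, hTU.trans (subset_insert a U), hcap, fun e he heT => ?_⟩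
      rcases mem_insert.mp he with rfl | he
      · exact ⟨v, hv, hcv, fun f hf => ha_min f (hTU (mem_filter.mp hf).1)⟩
      · exact hsat e he heT

theorem sum_le_sum_edgesAt_of_subset_compl [Fintype E] [DecidableEq E] {w : E → ℝ}
    (hw : ∀ e, 0 ≤ w e) {T R : Finset E} {v : V}
    (hdeg : #(G.edgesAt univ v) ≤ 2 * #(G.edgesAt T v)) (hRT : R ⊆ G.edgesAt Tᶜ v)
    (hle : ∀ e ∈ R, ∀ f ∈ G.edgesAt T v, w e ≤ w f) :
    ∑ e ∈ R, w e ≤ ∑ e ∈ G.edgesAt T v, w e := by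
  refine sum_le_sum_of_card_le_of_forall_le (fun f _ => hw f) ?_ hle
  have := card_le_card hRT
  have := G.card_edgesAt_add_card_edgesAt_compl T v
  omega

theorem sum_le_three_mul_sum [Fintype E] (w : E → ℝ) (hw : ∀ e, 0 ≤ w e) (T : Finset E)
    (hsat : ∀ e ∉ T, ∃ v ∈ G.ends e, #(G.edgesAt univ v) ≤ 2 * #(G.edgesAt T v) ∧
      ∀ f ∈ G.edgesAt T v, w e ≤ w f) :
    ∑ e, w e ≤ 3 * ∑ e ∈ T, w e := by
  classical
  cases isEmpty_or_nonempty V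
  · have : IsEmpty E := ⟨fun e => by simpa [eq_empty_of_isEmpty (G.ends e)] using G.card_ends e⟩
    simp [eq_empty_of_isEmpty T]
  choose! φ hφends hφdeg hφle using hsat
  have hfiber (e : E) (he : e ∈ Tᶜ) :
      ∑ f ∈ Tᶜ with φ f = φ e, w f ≤ ∑ f ∈ G.edgesAt T (φ e), w f := by
    refine G.sum_le_sum_edgesAt_of_subset_compl hw (hφdeg e (mem_compl.mp he)) ?_ ?_
    · intro f hf
      obtain ⟨hfT, hφf⟩ := mem_filter.mp hf
      exact mem_filter.mpr ⟨hfT, hφf ▸ hφends f (mem_compl.mp hfT)⟩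
    · intro f hf
      obtain ⟨hfT, hφf⟩ := mem_filter.mp hf
      exact hφf ▸ hφle f (mem_compl.mp hfT)
  have hcompl : ∑ e ∈ Tᶜ, w e ≤ 2 * ∑ e ∈ T, w e := calc
    ∑ e ∈ Tᶜ, w e = ∑ v ∈ Tᶜ.image φ, ∑ e ∈ Tᶜ with φ e = v, w e :=
        (sum_fiberwise_of_maps_to (fun e he => mem_image_of_mem φ he) w).symm
    _ ≤ ∑ v ∈ Tᶜ.image φ, ∑ e ∈ G.edgesAt T v, w e :=
        sum_le_sum <| forall_mem_image.mpr hfiber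
    _ ≤ ∑ v ∈ univ.biUnion G.ends, ∑ e ∈ G.edgesAt T v, w e := by
        refine sum_le_sum_of_subset_of_nonneg (forall_mem_image.mpr fun e he => ?_)
          fun v _ _ => sum_nonneg fun f _ => hw f
        exact mem_biUnion.mpr ⟨e, mem_univ e, hφends e (mem_compl.mp he)⟩
    _ = 2 * ∑ e ∈ T, w e := by
        rw [G.sum_sum_edgesAt T fun e _ => subset_biUnion_of_mem G.ends (mem_univ e),
          two_nsmul, two_mul]
  linarith [sum_add_sum_compl T w]

end GraphEdges

theorem exists_heavy_half_degree_subgraph_general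
    {V E : Type} [DecidableEq V] [Fintype E]
    (G : GraphEdges V E) (w : E → ℝ) (hw : ∀ e, 0 ≤ w e) :
    ∃ S : Finset E,
      (1 / 3 : ℝ) * ∑ e : E, w e ≤ ∑ e ∈ S, w e ∧
      ∀ v : V, (S.filter (fun e => v ∈ G.ends e)).card ≤
        ((Finset.univ.filter (fun e : E => v ∈ G.ends e)).card + 1) / 2 := by
  obtain ⟨T, -, hcap, hsat⟩ := G.exists_greedy_capped_subset
    (fun v => (#(G.edgesAt univ v) + 1) / 2) w univ
  refine ⟨T, ?_, hcap⟩
  rw [one_div, inv_mul_le_iff₀ three_pos]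
  refine G.sum_le_three_mul_sum w hw T fun e he => ?_
  obtain ⟨v, hv, hcv, hle⟩ := hsat e (mem_univ e) he
  exact ⟨v, hv, by omega, hle⟩

/-- In any finite simple graph with nonnegative edge weights
there is a set `S` of edges carrying at least a third of the total weight in
which every vertex `v` has degree at most `⌈d_v / 2⌉`. -/
theorem exists_heavy_half_degree_subgraph
    {V E : Type} [DecidableEq V] [Fintype E] [DecidableEq E]
    (G : GraphEdges V E) (w : E → ℝ) (hw : ∀ e, 0 ≤ w e) :
    ∃ S : Finset E,
      (1 / 3 : ℝ) * ∑ e : E, w e ≤ ∑ e ∈ S, w e ∧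
      ∀ v : V, (S.filter (fun e => v ∈ G.ends e)).card ≤
        ((Finset.univ.filter (fun e : E => v ∈ G.ends e)).card + 1) / 2 :=
  exists_heavy_half_degree_subgraph_general G w hw
end

section
/- Let G be a finite bipartite simple graph with parts L and R, where every vertex of L has capacity 1 and each vertex r ∈ R has capacity C(r) ∈ ℤ_{>0}, and let S and O be capacitated matchings. If every edge of O either shares its left endpoint with some edge of S, or has right endpoint r such that the number of edges of S incident to r is at least C(r)/2, then |O| ≤ 3·|S|. -/
/-!
Split `O` into the edges whose left endpoint is covered by `S` and the rest. Since left
capacities are `1`, the first part injects into `S` through left endpoints. Every edge of the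
second part lies at a right vertex `r` carrying at most `C r ≤ 2 · deg_S r` edges of `O`; summing
over right vertices charges at most two of these edges to each edge of `S`.
-/

open Finset

/-- A finite bipartite simple graph presented via an abstract edge type: each
edge has a left endpoint in `L` and a right endpoint in `R`, and distinct
edges have distinct endpoint pairs. -/
structure BipGraph (L R E : Type) where
  endL : E → L
  endR : E → R
  edge_injective : Function.Injective fun e => (endL e, endR e)

/-- A capacitated matching in the many-to-one bipartite setting: each left
vertex is incident to at most one edge, and each right vertex `r` to at most
`C r` edges. -/
def BipGraph.IsCapMatching {L R E : Type} [DecidableEq L] [DecidableEq R]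
    (G : BipGraph L R E) (C : R → ℕ) (M : Finset E) : Prop :=
  (∀ l : L, (M.filter (fun e => G.endL e = l)).card ≤ 1) ∧
  (∀ r : R, (M.filter (fun e => G.endR e = r)).card ≤ C r)

namespace Finset

variable {α β : Type*} [DecidableEq β] {s t : Finset α} {f : α → β}

lemma injOn_of_card_filter_eq_le_one (hs : ∀ b, #{a ∈ s | f a = b} ≤ 1) : Set.InjOn f s :=
  fun a ha a' ha' hfa =>
    card_le_one.mp (hs (f a)) a (mem_filter.mpr ⟨ha, rfl⟩) a' (mem_filter.mpr ⟨ha', hfa.symm⟩)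

lemma card_le_card_of_injOn_of_image_subset (hf : Set.InjOn f s) (hst : s.image f ⊆ t.image f) :
    #s ≤ #t := by
  rw [← card_image_of_injOn hf]
  exact (card_le_card hst).trans card_image_le

lemma card_le_mul_card_of_card_fiber_le {k : ℕ}
    (h : ∀ a ∈ s, #{x ∈ s | f x = f a} ≤ k * #{x ∈ t | f x = f a}) : #s ≤ k * #t :=
  calc #s = ∑ b ∈ s.image f, #{x ∈ s | f x = b} := card_eq_sum_card_image f s
    _ ≤ ∑ b ∈ s.image f, k * #{x ∈ t | f x = b} := sum_le_sum <| by
        simp only [forall_mem_image]; exact h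
    _ = k * #{x ∈ t | f x ∈ s.image f} := by rw [← mul_sum, sum_card_fiberwise_eq_card_filter]
    _ ≤ k * #t := Nat.mul_le_mul_left k (card_filter_le _ _)

end Finset

theorem manyToOne_charging_general
    {L R E : Type} [DecidableEq L] [DecidableEq R]
    (G : BipGraph L R E) (C : R → ℕ)
    (S O : Finset E)
    (hO : G.IsCapMatching C O)
    (h : ∀ e ∈ O, (∃ f ∈ S, G.endL f = G.endL e) ∨
        C (G.endR e) ≤ 2 * (S.filter (fun f => G.endR f = G.endR e)).card) :
    O.card ≤ 3 * S.card := by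
  classical
  set covered : E → Prop := fun e => ∃ f ∈ S, G.endL f = G.endL e
  have hcovered : #{e ∈ O | covered e} ≤ #S := by
    refine card_le_card_of_injOn_of_image_subset (f := G.endL) ?_ ?_
    · exact injOn_of_card_filter_eq_le_one fun l =>
        (card_le_card (filter_subset_filter _ (filter_subset _ _))).trans (hO.1 l)
    · simp only [image_subset_iff, mem_filter, mem_image]
      exact fun e ⟨_, f, hf, hfe⟩ => ⟨f, hf, hfe⟩
  have huncovered : #{e ∈ O | ¬covered e} ≤ 2 * #S := by
    refine card_le_mul_card_of_card_fiber_le (f := G.endR) fun e he => ?_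
    obtain ⟨heO, hne⟩ := mem_filter.mp he
    calc #{x ∈ O.filter (¬covered ·) | G.endR x = G.endR e}
        ≤ #{x ∈ O | G.endR x = G.endR e} := card_le_card (filter_subset_filter _ (filter_subset _ _))
      _ ≤ C (G.endR e) := hO.2 _
      _ ≤ 2 * #{x ∈ S | G.endR x = G.endR e} := (h e heO).resolve_left hne
  have hsplit : #{e ∈ O | covered e} + #{e ∈ O | ¬covered e} = #O :=
    card_filter_add_card_filter_not covered
  omega

/-- In the many-to-one bipartite setting, if every edge of a
capacitated matching `O` either shares its left endpoint with an edge of the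
capacitated matching `S`, or has a right endpoint `r` whose `S`-degree is at
least `C r / 2`, then `|O| ≤ 3|S|`. -/
theorem manyToOne_charging
    {L R E : Type} [DecidableEq L] [DecidableEq R] [DecidableEq E]
    (G : BipGraph L R E) (C : R → ℕ) (hC : ∀ r, 0 < C r)
    (S O : Finset E)
    (hS : G.IsCapMatching C S) (hO : G.IsCapMatching C O)
    (h : ∀ e ∈ O, (∃ f ∈ S, G.endL f = G.endL e) ∨
        C (G.endR e) ≤ 2 * (S.filter (fun f => G.endR f = G.endR e)).card) :
    O.card ≤ 3 * S.card :=
  manyToOne_charging_general G C S O hO h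
end

section
/- Let G = (V, E) be a finite simple graph with vertex capacities C : V → ℤ_{>0} and nonnegative edge weights w : E → ℝ_{≥0}. Let S and N be disjoint sets of edges, each a capacitated matching. Suppose every vertex v incident to some edge of N has at most ⌊C(v)/2⌋ edges of S incident to it. Then there exists N' ⊆ N with Σ_{e ∈ N'} w(e) ≥ (1/3) · Σ_{e ∈ N} w(e) such that S ∪ N' is a capacitated matching. -/
open Finset

/-- A capacitated matching: each vertex `v` is incident to at most `C v`
of its edges. -/
def GraphEdges.IsCapMatching {V E : Type} [DecidableEq V] (G : GraphEdges V E)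
    (C : V → ℕ) (M : Finset E) : Prop :=
  ∀ v, (M.filter (fun e => v ∈ G.ends e)).card ≤ C v

lemma exists_coloring {V E : Type} [DecidableEq V] [DecidableEq E]
    (G : GraphEdges V E) (cap : V → ℕ) (M : Finset E) :
    (∀ v, (M.filter (fun e => v ∈ G.ends e)).card ≤ cap v) →
    ∃ c : E → Fin 3, ∀ i v,
      (M.filter (fun e => c e = i ∧ v ∈ G.ends e)).card ≤ (cap v + 1) / 2 := by
  classical
  induction M using Finset.induction_on with
  | empty => intro _; exact ⟨fun _ => 0, fun i v => by simp⟩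
  | @insert e M he ih =>
    intro hdeg
    obtain ⟨c, hc⟩ := ih (fun v =>
      le_trans (Finset.card_le_card (Finset.filter_subset_filter _ (Finset.subset_insert _ _))) (hdeg v))
    obtain ⟨u, v, huv, hends⟩ := Finset.card_eq_two.mp (G.card_ends e)
    have hdis : ∀ (x : V) (i j : Fin 3), i ≠ j →
        (M.filter (fun f => c f = i ∧ x ∈ G.ends f)).card +
        (M.filter (fun f => c f = j ∧ x ∈ G.ends f)).card ≤
        (M.filter (fun f => x ∈ G.ends f)).card := by
      intro x i j hij
      rw [← Finset.card_union_of_disjoint]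
      · apply Finset.card_le_card
        intro f hf
        simp only [Finset.mem_union, Finset.mem_filter] at hf ⊢
        tauto
      · rw [Finset.disjoint_left]
        intro f hfi hfj
        simp only [Finset.mem_filter] at hfi hfj
        exact hij (hfi.2.1 ▸ hfj.2.1 ▸ rfl)
    have hdu : (M.filter (fun f => u ∈ G.ends f)).card + 1 ≤ cap u := by
      have h0 := hdeg u
      rwa [Finset.filter_insert, if_pos (by rw [hends]; simp),
        Finset.card_insert_of_notMem
          (fun hmem => he (Finset.mem_of_mem_filter _ hmem))] at h0
    have hdv : (M.filter (fun f => v ∈ G.ends f)).card + 1 ≤ cap v := by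
      have h0 := hdeg v
      rwa [Finset.filter_insert, if_pos (by rw [hends]; simp),
        Finset.card_insert_of_notMem
          (fun hmem => he (Finset.mem_of_mem_filter _ hmem))] at h0
    have key : ∃ i : Fin 3,
        (M.filter (fun f => c f = i ∧ u ∈ G.ends f)).card + 1 ≤ (cap u + 1) / 2 ∧
        (M.filter (fun f => c f = i ∧ v ∈ G.ends f)).card + 1 ≤ (cap v + 1) / 2 := by
      have h01 := hdis u 0 1 (by decide)
      have h02 := hdis u 0 2 (by decide)
      have h12 := hdis u 1 2 (by decide)
      have g01 := hdis v 0 1 (by decide)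
      have g02 := hdis v 0 2 (by decide)
      have g12 := hdis v 1 2 (by decide)
      by_contra hcon
      push_neg at hcon
      have k0 := hcon 0
      have k1 := hcon 1
      have k2 := hcon 2
      omega
    obtain ⟨i, hiu, hiv⟩ := key
    refine ⟨Function.update c e i, fun j x => ?_⟩
    have hfilt : (M.filter (fun f => Function.update c e i f = j ∧ x ∈ G.ends f)) =
        (M.filter (fun f => c f = j ∧ x ∈ G.ends f)) := by
      apply Finset.filter_congr
      intro f hf
      have hne : f ≠ e := fun hfe => he (hfe ▸ hf)
      simp [Function.update_of_ne hne]
    rw [Finset.filter_insert]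
    split_ifs with hcase
    · rw [Finset.card_insert_of_notMem
        (fun hmem => he (Finset.mem_of_mem_filter _ hmem)), hfilt]
      obtain ⟨hje, hxe⟩ := hcase
      rw [Function.update_self] at hje
      subst hje
      rw [hends] at hxe
      rcases Finset.mem_insert.mp hxe with rfl | hxv
      · exact hiu
      · rw [Finset.mem_singleton] at hxv; subst hxv; exact hiv
    · rw [hfilt]; exact hc j x

/-- Let `S` and `N` be disjoint capacitated matchings such
that every vertex `v` touched by `N` has `S`-degree at most `⌊C v / 2⌋`. Then
some `N' ⊆ N` carries at least a third of the weight of `N` and `S ∪ N'` is a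
capacitated matching. -/
theorem cap_augmenting_subset
    {V E : Type} [DecidableEq V] [DecidableEq E]
    (G : GraphEdges V E) (C : V → ℕ) (hC : ∀ v, 0 < C v)
    (w : E → ℝ) (hw : ∀ e, 0 ≤ w e)
    (S N : Finset E) (hdisj : Disjoint S N)
    (hS : G.IsCapMatching C S) (hN : G.IsCapMatching C N)
    (h : ∀ e ∈ N, ∀ v ∈ G.ends e,
        (S.filter (fun f => v ∈ G.ends f)).card ≤ C v / 2) :
    ∃ N' ⊆ N, (1 / 3 : ℝ) * ∑ e ∈ N, w e ≤ ∑ e ∈ N', w e ∧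
      G.IsCapMatching C (S ∪ N') := by
  classical
  obtain ⟨c, hc⟩ := exists_coloring G C N hN
  obtain ⟨i, -, hmax⟩ := Finset.exists_max_image (Finset.univ : Finset (Fin 3))
      (fun i => ∑ e ∈ N.filter (fun e => c e = i), w e) ⟨0, Finset.mem_univ 0⟩
  refine ⟨N.filter (fun e => c e = i), Finset.filter_subset _ _, ?_, ?_⟩
  · have htotal : ∑ j : Fin 3, ∑ e ∈ N.filter (fun e => c e = j), w e = ∑ e ∈ N, w e :=
      Finset.sum_fiberwise N c (fun e => w e)
    have h3 : ∑ j : Fin 3, ∑ e ∈ N.filter (fun e => c e = j), w e ≤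
        3 * ∑ e ∈ N.filter (fun e => c e = i), w e := by
      calc ∑ j : Fin 3, ∑ e ∈ N.filter (fun e => c e = j), w e
          ≤ ∑ _j : Fin 3, ∑ e ∈ N.filter (fun e => c e = i), w e :=
            Finset.sum_le_sum (fun j _ => hmax j (Finset.mem_univ j))
        _ = 3 * ∑ e ∈ N.filter (fun e => c e = i), w e := by
            simp [Finset.sum_const, Finset.card_univ]
    rw [htotal] at h3
    linarith
  · intro x
    rw [Finset.filter_union, Finset.card_union_of_disjoint
      (Disjoint.mono (Finset.filter_subset _ _) (Finset.filter_subset _ _)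
        (hdisj.mono_right (Finset.filter_subset _ _)))]
    by_cases hx : ((N.filter (fun e => c e = i)).filter (fun e => x ∈ G.ends e)).Nonempty
    · obtain ⟨e, hee⟩ := hx
      simp only [Finset.mem_filter] at hee
      have hS2 := h e hee.1.1 x hee.2
      have hcix : ((N.filter (fun e => c e = i)).filter (fun e => x ∈ G.ends e)).card ≤
          (C x + 1) / 2 := by
        rw [Finset.filter_filter]
        exact hc i x
      omega
    · rw [Finset.not_nonempty_iff_eq_empty] at hx
      rw [hx]
      simpa using hS x
end

section
/- Let G be a finite bipartite simple graph with parts L and R, where every vertex of L has capacity 1 and each r ∈ R has capacity C(r) ∈ ℤ_{>0}, with nonnegative edge weights w. Let S and N be disjoint sets of edges, each a capacitated matching. Suppose every edge of N has its left endpoint incident to no edge of S, and its right endpoint r incident to at most C(r)/2 edges of S. Then there exists N' ⊆ N with Σ_{e ∈ N'} w(e) ≥ (1/2) · Σ_{e ∈ N} w(e) such that S ∪ N' is a capacitated matching. -/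
open Finset

lemma half_subset {E : Type} [DecidableEq E] (T : Finset E) (w : E → ℝ)
    (hw : ∀ e, 0 ≤ w e) (k : ℕ) (hk : T.card ≤ 2 * k) :
    ∃ U ⊆ T, U.card ≤ k ∧ (1 / 2 : ℝ) * ∑ e ∈ T, w e ≤ ∑ e ∈ U, w e := by
  by_cases hTk : T.card ≤ k
  · exact ⟨T, Finset.Subset.refl T, hTk, by
      have : (0:ℝ) ≤ ∑ e ∈ T, w e := Finset.sum_nonneg fun e _ => hw e
      linarith⟩
  push_neg at hTk
  have hkT : k ≤ T.card := hTk.le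
  have hne : (T.powersetCard k).Nonempty := (Finset.powersetCard_nonempty).2 hkT
  obtain ⟨U, hUmem, hUmax⟩ := Finset.exists_max_image (T.powersetCard k)
    (fun U => ∑ e ∈ U, w e) hne
  rw [Finset.mem_powersetCard] at hUmem
  obtain ⟨hUT, hUcard⟩ := hUmem
  refine ⟨U, hUT, hUcard.le, ?_⟩
  have hsd : (T \ U).card ≤ k := by
    rw [Finset.card_sdiff_of_subset hUT]; omega
  obtain ⟨V, hSV, hVT, hVcard⟩ := Finset.exists_subsuperset_card_eq
    (Finset.sdiff_subset (s := T) (t := U)) hsd hkT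
  have h1 : ∑ e ∈ T \ U, w e ≤ ∑ e ∈ V, w e :=
    Finset.sum_le_sum_of_subset_of_nonneg hSV (fun e _ _ => hw e)
  have h2 : ∑ e ∈ V, w e ≤ ∑ e ∈ U, w e := by
    apply hUmax; rw [Finset.mem_powersetCard]; exact ⟨hVT, hVcard⟩
  have h3 : ∑ e ∈ T, w e = ∑ e ∈ U, w e + ∑ e ∈ T \ U, w e := by
    rw [← Finset.sum_union (Finset.disjoint_sdiff)]
    congr 1
    exact (Finset.union_sdiff_of_subset hUT).symm
  linarith

/-- In the many-to-one bipartite setting, let `S` and `N` be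
disjoint capacitated matchings such that every edge of `N` has its left
endpoint incident to no edge of `S` and its right endpoint `r` incident to at
most `C r / 2` edges of `S`. Then some `N' ⊆ N` carries at least half the
weight of `N` and `S ∪ N'` is a capacitated matching. -/
theorem manyToOne_augmenting_subset
    {L R E : Type} [DecidableEq L] [DecidableEq R] [DecidableEq E]
    (G : BipGraph L R E) (C : R → ℕ) (hC : ∀ r, 0 < C r)
    (w : E → ℝ) (hw : ∀ e, 0 ≤ w e)
    (S N : Finset E) (hdisj : Disjoint S N)
    (hS : G.IsCapMatching C S) (hN : G.IsCapMatching C N)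
    (h : ∀ e ∈ N, (∀ f ∈ S, G.endL f ≠ G.endL e) ∧
        2 * (S.filter (fun f => G.endR f = G.endR e)).card ≤ C (G.endR e)) :
    ∃ N' ⊆ N, (1 / 2 : ℝ) * ∑ e ∈ N, w e ≤ ∑ e ∈ N', w e ∧
      G.IsCapMatching C (S ∪ N') := by
  classical
  have key : ∀ r : R, ∃ U : Finset E,
      U ⊆ N.filter (fun e => G.endR e = r) ∧
      U.card + (S.filter (fun f => G.endR f = r)).card ≤ C r ∧
      (1 / 2 : ℝ) * ∑ e ∈ N.filter (fun e => G.endR e = r), w e ≤ ∑ e ∈ U, w e := by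
    intro r
    set T := N.filter (fun e => G.endR e = r) with hT
    set s := (S.filter (fun f => G.endR f = r)).card with hs
    rcases T.eq_empty_or_nonempty with hTe | ⟨e, he⟩
    · refine ⟨∅, by simp, ?_, by simp [hTe]⟩
      simpa using (hS.2 r)
    · have heN : e ∈ N := (Finset.mem_filter.1 he).1
      have her : G.endR e = r := (Finset.mem_filter.1 he).2
      have h2s : 2 * s ≤ C r := by
        have := (h e heN).2
        rwa [her] at this
      have hTC : T.card ≤ C r := hN.2 r
      have hk : T.card ≤ 2 * (C r - s) := by omega
      obtain ⟨U, hUT, hUc, hUsum⟩ := half_subset T w hw (C r - s) hk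
      exact ⟨U, hUT, by omega, hUsum⟩
  choose U hU1 hU2 hU3 using key
  set N' : Finset E := N.filter (fun e => e ∈ U (G.endR e)) with hN'
  have hN'sub : N' ⊆ N := Finset.filter_subset _ _
  have hfib : ∀ r : R, N'.filter (fun e => G.endR e = r) = U r := by
    intro r
    ext e
    simp only [hN', Finset.mem_filter, and_assoc]
    constructor
    · rintro ⟨heN, heU, her⟩
      rwa [her] at heU
    · intro heU
      have := hU1 r heU
      rw [Finset.mem_filter] at this
      exact ⟨this.1, by rw [this.2]; exact heU, this.2⟩
  refine ⟨N', hN'sub, ?_, ?_, ?_⟩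
  · have hmapsN : ∀ e ∈ N, G.endR e ∈ N.image G.endR := fun e he =>
      Finset.mem_image_of_mem _ he
    have hmapsN' : ∀ e ∈ N', G.endR e ∈ N.image G.endR := fun e he =>
      Finset.mem_image_of_mem _ (hN'sub he)
    have eN := Finset.sum_fiberwise_of_maps_to hmapsN w
    have eN' := Finset.sum_fiberwise_of_maps_to hmapsN' w
    rw [← eN, ← eN', Finset.mul_sum]
    apply Finset.sum_le_sum
    intro r _
    rw [hfib r]
    exact hU3 r
  · intro l
    rw [Finset.filter_union]
    rcases (N'.filter (fun e => G.endL e = l)).eq_empty_or_nonempty with hE | ⟨e, he⟩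
    · rw [hE, Finset.union_empty]; exact hS.1 l
    rcases (S.filter (fun e => G.endL e = l)).eq_empty_or_nonempty with hE2 | ⟨f, hf⟩
    · rw [hE2, Finset.empty_union]
      calc (N'.filter (fun e => G.endL e = l)).card
          ≤ (N.filter (fun e => G.endL e = l)).card :=
            Finset.card_le_card (Finset.filter_subset_filter _ hN'sub)
        _ ≤ 1 := hN.1 l
    · exfalso
      rw [Finset.mem_filter] at he hf
      exact (h e (hN'sub he.1)).1 f hf.1 (hf.2.trans he.2.symm)
  · intro r
    rw [Finset.filter_union]
    have hdisj2 : Disjoint (S.filter (fun e => G.endR e = r))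
        (N'.filter (fun e => G.endR e = r)) :=
      Finset.disjoint_filter_filter (hdisj.mono_right hN'sub)
    rw [Finset.card_union_of_disjoint hdisj2, hfib r]
    have := hU2 r
    omega
end

section
/- Let V be a finite set, k a positive integer, H a family of subsets of V each of cardinality at most k, and w : H → ℝ_{≥0} a weight function. Let M ⊆ H be a family of pairwise disjoint sets such that every S ∈ H intersects some F ∈ M with w(F) ≥ w(S). Then for every family M' ⊆ H of pairwise disjoint sets, Σ_{F ∈ M} w(F) ≥ (1/k) · Σ_{S ∈ M'} w(S). -/
open Finset

/-- A hypergraph of teams: each hyperedge is a subset of the vertex set `V`,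
and distinct hyperedges are distinct subsets. -/
structure TeamStruct (V H : Type) where
  mem : H → Finset V
  mem_injective : Function.Injective mem

/-- A hypergraph matching: a family of pairwise disjoint hyperedges. -/
def TeamStruct.IsHMatching {V H : Type} (G : TeamStruct V H) (M : Finset H) : Prop :=
  ∀ S ∈ M, ∀ T ∈ M, S ≠ T → Disjoint (G.mem S) (G.mem T)

/-!
Charge every hyperedge `S` of the competing matching `M'` to a member `f S` of `M` that meets it
and is at least as heavy. The hyperedges charged to a fixed `F ∈ M` are pairwise disjoint and all
meet `F`, so there are at most `|F| ≤ k` of them; hence `∑_{M'} w ≤ k · ∑_M w`.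
-/

theorem Finset.card_le_card_of_pairwiseDisjoint_of_not_disjoint {ι α : Type*} [DecidableEq α]
    {s : Finset ι} {t : ι → Finset α} {u : Finset α} (hs : (s : Set ι).PairwiseDisjoint t)
    (hu : ∀ i ∈ s, ¬ Disjoint (t i) u) : #s ≤ #u := calc
  #s ≤ #(s.biUnion fun i ↦ t i ∩ u) :=
    card_le_card_biUnion (hs.mono fun _ ↦ inter_subset_left)
      fun i hi ↦ not_disjoint_iff_nonempty_inter.mp (hu i hi)
  _ ≤ #u := card_le_card (biUnion_subset.mpr fun _ _ ↦ inter_subset_right)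

theorem Finset.sum_le_nsmul_sum_of_card_fiber_le {ι κ R : Type*} [DecidableEq κ]
    [AddCommMonoid R] [PartialOrder R] [IsOrderedAddMonoid R]
    {s : Finset ι} {t : Finset κ} {f : ι → κ} (hf : ∀ i ∈ s, f i ∈ t)
    {a : ι → R} {b : κ → R} (hb : ∀ j ∈ t, 0 ≤ b j) (hab : ∀ i ∈ s, a i ≤ b (f i))
    {k : ℕ} (hfiber : ∀ j ∈ t, #{i ∈ s | f i = j} ≤ k) :
    ∑ i ∈ s, a i ≤ k • ∑ j ∈ t, b j := calc
  ∑ i ∈ s, a i = ∑ j ∈ t, ∑ i ∈ s with f i = j, a i := (sum_fiberwise_of_maps_to hf a).symm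
  _ ≤ ∑ j ∈ t, #{i ∈ s | f i = j} • b j := sum_le_sum fun _ _ ↦ sum_le_card_nsmul _ _ _
      fun i hi ↦ (mem_filter.mp hi).2 ▸ hab i (mem_filter.mp hi).1
  _ ≤ ∑ j ∈ t, k • b j := sum_le_sum fun j hj ↦ nsmul_le_nsmul_left (hb j hj) (hfiber j hj)
  _ = k • ∑ j ∈ t, b j := (smul_sum ..).symm

namespace TeamStruct

variable {V H : Type} {G : TeamStruct V H}

theorem IsHMatching.pairwiseDisjoint {M : Finset H} (hM : G.IsHMatching M) :
    (M : Set H).PairwiseDisjoint G.mem :=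
  fun S hS T hT hne ↦ hM S hS T hT hne

theorem IsHMatching.card_filter_not_disjoint_le [DecidableEq V] {M : Finset H}
    (hM : G.IsHMatching M) (F : Finset V) : #{S ∈ M | ¬ Disjoint (G.mem S) F} ≤ #F :=
  card_le_card_of_pairwiseDisjoint_of_not_disjoint
    (hM.pairwiseDisjoint.subset (filter_subset _ _)) fun _ hS ↦ (mem_filter.mp hS).2

end TeamStruct

theorem greedy_hypergraph_matching_approx_general
    {V H : Type}
    (G : TeamStruct V H) (k : ℕ)
    (hcard : ∀ S : H, (G.mem S).card ≤ k)
    (w : H → ℝ) (hw : ∀ S, 0 ≤ w S)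
    (M : Finset H)
    (hgreedy : ∀ S : H, ∃ F ∈ M, ¬ Disjoint (G.mem S) (G.mem F) ∧ w S ≤ w F)
    (M' : Finset H) (hM' : G.IsHMatching M') :
    (1 / k : ℝ) * ∑ S ∈ M', w S ≤ ∑ S ∈ M, w S := by
  classical
  choose f hfM hf_meets hf_heavier using hgreedy
  have hfiber (F : H) : #{S ∈ M' | f S = F} ≤ k := calc
    #{S ∈ M' | f S = F} ≤ #{S ∈ M' | ¬ Disjoint (G.mem S) (G.mem F)} :=
      card_le_card (monotone_filter_right _ fun S _ hS ↦ hS ▸ hf_meets S)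
    _ ≤ #(G.mem F) := hM'.card_filter_not_disjoint_le _
    _ ≤ k := hcard F
  have hcharge : ∑ S ∈ M', w S ≤ k * ∑ F ∈ M, w F := by
    rw [← nsmul_eq_mul]
    exact sum_le_nsmul_sum_of_card_fiber_le (fun S _ ↦ hfM S) (fun F _ ↦ hw F)
      (fun S _ ↦ hf_heavier S) fun F _ ↦ hfiber F
  rw [one_div]
  exact inv_mul_le_of_le_mul₀ k.cast_nonneg (sum_nonneg fun F _ ↦ hw F) hcharge

/-- In a hypergraph whose hyperedges have cardinality at
most `k`, if `M` is a matching such that every hyperedge intersects some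
member of `M` of at least its weight, then `M` is a `1/k`-approximation to
every matching in total weight. -/
theorem greedy_hypergraph_matching_approx
    {V H : Type} [Fintype V] [Fintype H]
    (G : TeamStruct V H) (k : ℕ) (hk : 0 < k)
    (hcard : ∀ S : H, (G.mem S).card ≤ k)
    (w : H → ℝ) (hw : ∀ S, 0 ≤ w S)
    (M : Finset H) (hM : G.IsHMatching M)
    (hgreedy : ∀ S : H, ∃ F ∈ M, ¬ Disjoint (G.mem S) (G.mem F) ∧ w S ≤ w F)
    (M' : Finset H) (hM' : G.IsHMatching M') :
    (1 / k : ℝ) * ∑ S ∈ M', w S ≤ ∑ S ∈ M, w S :=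
  greedy_hypergraph_matching_approx_general G k hcard w hw M hgreedy M' hM'
end

section
/- For every positive integer n, consider the random subgraph of the complete bipartite graph K_{n,n} in which each of the n² edges is included independently with probability 1/n. Then the expected size of a maximum matching of the random subgraph is at least n/e². -/
open Finset

/-- The size of a maximum matching of the subgraph of `K_{n,n}` consisting of
the edges `e` with `ω e = true`: the largest cardinality of a set of realized
edges that are pairwise non-adjacent (no two share a left or right vertex). -/
def maxMatchingSize (n : ℕ) (ω : Fin n × Fin n → Bool) : ℕ :=
  Finset.univ.sup fun M : Finset (Fin n × Fin n) =>
    if (∀ e ∈ M, ω e) ∧ (∀ e ∈ M, ∀ f ∈ M, e ≠ f → e.1 ≠ f.1 ∧ e.2 ≠ f.2)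
    then M.card else 0

/-! The edges that are isolated in the random graph (present, and the only present edge in their
row and column) form a matching. An edge is isolated with probability `p (1 - p) ^ (2n - 2)`, so
for `p = 1 / n` the expected number of isolated edges is `n (1 - 1/n) ^ (2(n - 1)) ≥ n / e²`,
since `(1 - 1/n) ^ (n - 1) ≥ 1 / e`. -/

section Bernoulli

variable {ι : Type*} [Fintype ι]

def bernoulliWeight (p : ℝ) (ω : ι → Bool) : ℝ :=
  ∏ i, if ω i then p else 1 - p

theorem bernoulliWeight_nonneg {p : ℝ} (hp₀ : 0 ≤ p) (hp₁ : p ≤ 1) (ω : ι → Bool) :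
    0 ≤ bernoulliWeight p ω :=
  prod_nonneg fun i _ => by split <;> linarith

theorem sum_bernoulliWeight_mul_indicator [DecidableEq ι] (p : ℝ) (S : Finset ι)
    (ω₀ : ι → Bool) :
    ∑ ω, bernoulliWeight p ω * (if ∀ i ∈ S, ω i = ω₀ i then 1 else 0) =
      ∏ i ∈ S, if ω₀ i then p else 1 - p := by
  -- The indicator factors over the coordinates, so the sum of products is a product of sums.
  set g : ι → Bool → ℝ := fun i b =>
    (if b then p else 1 - p) * if i ∈ S then (if b = ω₀ i then 1 else 0) else 1
  have hfactor : ∀ ω : ι → Bool,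
      bernoulliWeight p ω * (if ∀ i ∈ S, ω i = ω₀ i then 1 else 0) = ∏ i, g i (ω i) := by
    intro ω
    rw [prod_mul_distrib, Fintype.prod_ite_mem, prod_boole, bernoulliWeight]
    congr
  have hmarginal : ∀ i, ∑ b, g i b = if i ∈ S then (if ω₀ i then p else 1 - p) else 1 := by
    intro i
    by_cases hi : i ∈ S <;> cases h : ω₀ i <;> simp [g, hi, h]
  simp_rw [hfactor, ← Fintype.prod_sum, hmarginal, Fintype.prod_ite_mem]

end Bernoulli

section IsolatedEdges

variable {α β : Type*} [Fintype α] [Fintype β] [DecidableEq α] [DecidableEq β]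

def edgesMeeting (e : α × β) : Finset (α × β) :=
  univ.filter fun f => f.1 = e.1 ∨ f.2 = e.2

def isolatedEdges (ω : α × β → Bool) : Finset (α × β) :=
  univ.filter fun e => ∀ f ∈ edgesMeeting e, ω f = decide (f = e)

theorem card_edgesMeeting_add_one (e : α × β) :
    #(edgesMeeting e) + 1 = Fintype.card α + Fintype.card β := by
  have hunion : edgesMeeting e = ({e.1} ×ˢ univ) ∪ (univ ×ˢ {e.2}) := by
    ext f
    simp only [edgesMeeting, mem_filter, mem_union, mem_product, mem_singleton, mem_univ,
      true_and, and_true]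
  have hinter : ({e.1} ×ˢ univ) ∩ (univ ×ˢ {e.2}) = {e} := by
    ext f
    simp [Prod.ext_iff, eq_comm]
  rw [hunion, ← card_singleton e, ← hinter, card_union_add_card_inter]
  simp [add_comm]

theorem sum_bernoulliWeight_mul_indicator_mem_isolatedEdges (p : ℝ) (e : α × β) :
    ∑ ω, bernoulliWeight p ω * (if e ∈ isolatedEdges ω then 1 else 0) =
      p * (1 - p) ^ (Fintype.card α + Fintype.card β - 2) := by
  have he : e ∈ edgesMeeting e := by simp [edgesMeeting]
  simp only [isolatedEdges, mem_filter, mem_univ, true_and]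
  rw [sum_bernoulliWeight_mul_indicator, ← mul_prod_erase _ _ he]
  rw [prod_congr rfl fun f hf => if_neg (by simpa using (mem_erase.mp hf).1),
    prod_const, card_erase_of_mem he, ← card_edgesMeeting_add_one e]
  simp

theorem fst_ne_and_snd_ne_of_mem_isolatedEdges {ω : α × β → Bool} {e f : α × β}
    (he : e ∈ isolatedEdges ω) (hf : f ∈ isolatedEdges ω) (hef : e ≠ f) :
    e.1 ≠ f.1 ∧ e.2 ≠ f.2 := by
  simp only [isolatedEdges, edgesMeeting, mem_filter, mem_univ, true_and] at he hf
  have hωe : ω e = true := by simpa using he e (Or.inl rfl)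
  constructor <;> intro h <;> simpa [hωe, hef] using hf e (by simp [h])

end IsolatedEdges

theorem card_le_maxMatchingSize {n : ℕ} {ω : Fin n × Fin n → Bool}
    {M : Finset (Fin n × Fin n)} (hω : ∀ e ∈ M, ω e)
    (hM : ∀ e ∈ M, ∀ f ∈ M, e ≠ f → e.1 ≠ f.1 ∧ e.2 ≠ f.2) :
    #M ≤ maxMatchingSize n ω := by
  have hle := le_sup (f := fun M : Finset (Fin n × Fin n) =>
    if (∀ e ∈ M, ω e) ∧ (∀ e ∈ M, ∀ f ∈ M, e ≠ f → e.1 ≠ f.1 ∧ e.2 ≠ f.2)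
    then #M else 0) (mem_univ M)
  rwa [if_pos ⟨hω, hM⟩] at hle

theorem card_isolatedEdges_le_maxMatchingSize {n : ℕ} (ω : Fin n × Fin n → Bool) :
    #(isolatedEdges ω) ≤ maxMatchingSize n ω := by
  refine card_le_maxMatchingSize (fun e he => ?_)
    fun e he f hf => fst_ne_and_snd_ne_of_mem_isolatedEdges he hf
  simp only [isolatedEdges, edgesMeeting, mem_filter, mem_univ, true_and] at he
  simpa using he e (by simp)

-- For `n ≤ 1` the right-hand side is `1`, through `1 / 0 = 0` and `0 ^ 0 = 1`.
theorem Real.exp_neg_one_le_one_sub_one_div_pow (n : ℕ) :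
    Real.exp (-1) ≤ (1 - 1 / (n : ℝ)) ^ (n - 1) := by
  rcases n with _ | _ | m
  · simp [Real.exp_le_one_iff]
  · simp [Real.exp_le_one_iff]
  · have hbase : 1 - 1 / ((m + 2 : ℕ) : ℝ) = (1 + ((m + 1 : ℕ) : ℝ)⁻¹)⁻¹ := by
      push_cast; field_simp; ring
    rw [hbase, Nat.add_sub_cancel, inv_pow, Real.exp_neg]
    exact inv_anti₀ (by positivity) Real.one_add_inv_pow_le_exp

theorem div_exp_sq_le_mul_one_sub_one_div_pow (n : ℕ) :
    (n : ℝ) / Real.exp 1 ^ 2 ≤ n * (1 - 1 / (n : ℝ)) ^ (n + n - 2) := by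
  rw [div_eq_mul_inv, ← inv_pow, ← Real.exp_neg, show n + n - 2 = (n - 1) * 2 by omega,
    pow_mul]
  gcongr
  exact Real.exp_neg_one_le_one_sub_one_div_pow n

theorem expected_max_matching_Knn_general (n : ℕ) :
    (n : ℝ) / Real.exp 1 ^ 2 ≤
      ∑ ω : Fin n × Fin n → Bool,
        (∏ e : Fin n × Fin n, if ω e then (1 / n : ℝ) else 1 - 1 / n) *
          (maxMatchingSize n ω : ℝ) := by
  have hp₀ : (0 : ℝ) ≤ 1 / n := by positivity
  have hp₁ : (1 / n : ℝ) ≤ 1 := by simpa using Nat.cast_inv_le_one n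
  calc (n : ℝ) / Real.exp 1 ^ 2 ≤ n * (1 - 1 / (n : ℝ)) ^ (n + n - 2) :=
        div_exp_sq_le_mul_one_sub_one_div_pow n
    _ = ∑ e : Fin n × Fin n, ∑ ω,
          bernoulliWeight (1 / n) ω * (if e ∈ isolatedEdges ω then 1 else 0) := by
        simp only [sum_bernoulliWeight_mul_indicator_mem_isolatedEdges, sum_const, card_univ,
          Fintype.card_prod, Fintype.card_fin, nsmul_eq_mul]
        rcases eq_or_ne (n : ℝ) 0 with h | h
        · simp [h]
        · push_cast; field_simp
    _ = ∑ ω, bernoulliWeight (1 / n) ω * #(isolatedEdges ω) := by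
        rw [sum_comm]
        refine sum_congr rfl fun ω _ => ?_
        rw [← mul_sum, sum_boole]
        simp
    _ ≤ ∑ ω, bernoulliWeight (1 / n) ω * maxMatchingSize n ω := by
        gcongr with ω
        · exact bernoulliWeight_nonneg hp₀ hp₁ ω
        · exact_mod_cast card_isolatedEdges_le_maxMatchingSize ω

/-- For the random subgraph of `K_{n,n}` in which every edge
appears independently with probability `1/n`, the expected size of a maximum
matching is at least `n / e²`. -/
theorem expected_max_matching_Knn (n : ℕ) (hn : 0 < n) :
    (n : ℝ) / Real.exp 1 ^ 2 ≤
      ∑ ω : Fin n × Fin n → Bool,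
        (∏ e : Fin n × Fin n, if ω e then (1 / n : ℝ) else 1 - 1 / n) *
          (maxMatchingSize n ω : ℝ) :=
  expected_max_matching_Knn_general n
end
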